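/- For every n ≥ 2, the pair (Dic_{4n}, ⟨a⟩) is a strong Gelfand pair, where ⟨a⟩ is the maximal cyclic subgroup of order 2n of the dicyclic group Dic_{4n}. -/

import Mathlib

open CategoryTheory

/-- `(G, H)` is a strong Gelfand pair: the restriction to `H` of every irreducible
complex representation of `G` is multiplicity-free, i.e. every irreducible
complex representation of `H` occurs in it with multiplicity at most one
(equivalently, by Frobenius reciprocity, every irreducible character of `H`
induces to a multiplicity-free character of `G`). -/
def IsStrongGelfandPair (G : Type) [Group G] (H : Subgroup G) : Prop :=
  ∀ (V : FDRep ℂ G) (W : FDRep ℂ H), Simple V → Simple W →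
    Module.finrank ℂ (W ⟶ (Action.res (FGModuleCat ℂ) H.subtype).obj V) ≤ 1

/-!
The subgroup `H = ⟨a⟩` is abelian, so an irreducible representation `W` of `H` is a line on which
`H` acts by a character `χ`, and evaluation at a nonzero vector of `W` embeds `Hom_H(W, V)` into
the `χ`-weight space `V_χ` of `V`. For a nonzero `v ∈ V_χ`, the span of `v` and `xa 0 • v` is
stable under `Dic_{4n}`, because `xa 0` normalises `H` and `(xa 0)² ∈ H`; by irreducibility it is
all of `V`, so `dim V ≤ 2` and `dim V_χ ≤ 1` unless `V_χ = V`. In that last case an eigenvector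
of `xa 0` lies in `V_χ`, so the same argument shows that `V` is a line.
-/

open Module

namespace FDRep

variable {k G : Type*} [Field k] [Monoid G]

theorem hom_comm_apply {V W : FDRep k G} (f : V ⟶ W) (g : G) (v : V) :
    f.hom (V.ρ g v) = W.ρ g (f.hom v) :=
  congr($(f.comm g) v)

theorem eq_top_of_invariant (V : FDRep k G) [Simple V] (U : Submodule k V)
    (hU : ∀ g, ∀ v ∈ U, V.ρ g v ∈ U) (hU₀ : U ≠ ⊥) : U = ⊤ := by
  let ρU : Representation k G U :=
    { toFun g := (V.ρ g).restrict (hU g)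
      map_one' := by ext; simp
      map_mul' g h := by ext; simp [LinearMap.restrict_apply] }
  let ι : FDRep.of ρU ⟶ V := ⟨FGModuleCat.ofHom U.subtype, fun _ ↦ rfl⟩
  have : Mono ι := (Action.forget _ _).mono_of_mono_map
    (ConcreteCategory.mono_of_injective _ U.injective_subtype)
  have hι : ι ≠ 0 := by
    obtain ⟨v, hv, hv₀⟩ := Submodule.exists_mem_ne_zero_of_ne_bot hU₀
    intro h
    exact hv₀ congr($(h).hom ⟨v, hv⟩)
  have : IsIso ι := (Simple.mono_isIso_iff_nonzero ι).mpr hι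
  have hsurj : Function.Surjective ι.hom :=
    (FGModuleCat.isoToLinearEquiv ((Action.forget _ _).mapIso (asIso ι))).surjective
  rw [← U.range_subtype]
  exact LinearMap.range_eq_top_of_surjective _ hsurj

theorem span_eq_top_of_invariant (V : FDRep k G) [Simple V] {s : Set V}
    (hs : ∀ g, ∀ x ∈ s, V.ρ g x ∈ Submodule.span k s) {x : V} (hx : x ∈ s) (hx₀ : x ≠ 0) :
    Submodule.span k s = ⊤ := by
  refine V.eq_top_of_invariant _ (fun g v hv ↦ ?_) ?_
  · have : V.ρ g v ∈ (Submodule.span k s).map (V.ρ g) := Submodule.mem_map_of_mem hv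
    rw [Submodule.map_span] at this
    exact Submodule.span_le.mpr (Set.image_subset_iff.mpr (hs g)) this
  · exact fun h ↦ hx₀ (by simpa [h] using Submodule.subset_span (R := k) hx)

instance nontrivial_of_simple (V : FDRep k G) [Simple V] : Nontrivial V := by
  by_contra h
  rw [not_nontrivial_iff_subsingleton] at h
  exact id_nonzero V (by ext; exact Subsingleton.elim _ _)

theorem exists_smul_of_commute [IsAlgClosed k] (V : FDRep k G) [Simple V] (g₀ : G)
    (hg₀ : ∀ g, Commute g₀ g) : ∃ c : k, ∀ v : V, V.ρ g₀ v = c • v := by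
  let φ : V ⟶ V := ⟨FGModuleCat.ofHom (V.ρ g₀), fun g ↦ by
    ext v
    change V.ρ g₀ (V.ρ g v) = V.ρ g (V.ρ g₀ v)
    rw [← Module.End.mul_apply, ← map_mul, (hg₀ g).eq, map_mul, Module.End.mul_apply]⟩
  obtain ⟨c, hc⟩ := endomorphism_simple_eq_smul_id k φ
  exact ⟨c, fun v ↦ congr($(hc.symm).hom v)⟩

noncomputable def weightSpace (V : FDRep k G) {H : Type*} [Monoid H] (f : H →* G) (χ : H → k) :
    Submodule k V :=
  ⨅ h, Module.End.eigenspace (V.ρ (f h)) (χ h)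

theorem mem_weightSpace {V : FDRep k G} {H : Type*} [Monoid H] {f : H →* G} {χ : H → k}
    {v : V} : v ∈ V.weightSpace f χ ↔ ∀ h, V.ρ (f h) v = χ h • v := by
  simp [weightSpace, Submodule.mem_iInf]

theorem exists_finrank_hom_res_le_finrank_weightSpace [IsAlgClosed k] {H : Type*} [Monoid H]
    [IsMulCommutative H] (f : H →* G) (W : FDRep k H) [Simple W] (V : FDRep k G) :
    ∃ χ : H → k, finrank k (W ⟶ (Action.res _ f).obj V) ≤ finrank k (V.weightSpace f χ) := by
  choose χ hχ using fun h ↦ W.exists_smul_of_commute h (fun h' ↦ mul_comm' h h')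
  obtain ⟨w₀, hw₀⟩ := exists_ne (0 : W)
  have hspan : Submodule.span k {w₀} = ⊤ :=
    W.span_eq_top_of_invariant (fun h x hx ↦ by
      rw [Set.mem_singleton_iff.mp hx, hχ]
      exact Submodule.smul_mem _ _ (Submodule.mem_span_singleton_self _)) rfl hw₀
  let eval : (W ⟶ (Action.res _ f).obj V) →ₗ[k] V.weightSpace f χ :=
    { toFun φ := ⟨φ.hom w₀, mem_weightSpace.mpr fun h ↦ by
        have := hom_comm_apply φ h w₀
        rw [hχ, map_smul] at this
        exact this.symm⟩
      map_add' _ _ := rfl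
      map_smul' _ _ := rfl }
  refine ⟨χ, LinearMap.finrank_le_finrank_of_injective (f := eval) fun φ φ' hφφ' ↦ ?_⟩
  apply Action.hom_ext
  refine FGModuleCat.hom_ext (LinearMap.ext fun w ↦ ?_)
  obtain ⟨c, rfl⟩ := Submodule.mem_span_singleton.mp (hspan ▸ Submodule.mem_top : w ∈ _)
  simp only [map_smul]
  exact congr(c • ($hφφ' : V))

end FDRep

namespace QuaternionGroup

variable {n : ℕ}

theorem a_one_zpow (m : ℤ) : (a 1 : QuaternionGroup n) ^ m = a m := by
  cases m with
  | ofNat m => simp [a_one_pow]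
  | negSucc m =>
    rw [zpow_negSucc, a_one_pow, inv_eq_of_mul_eq_one_right (b := a (-(m + 1 : ℕ)))]
    · push_cast [Int.negSucc_eq]
      ring_nf
    · rw [a_mul_a, add_neg_cancel, a_zero]

theorem a_mem_zpowers_a_one (i : ZMod (2 * n)) :
    a i ∈ Subgroup.zpowers (a 1 : QuaternionGroup n) :=
  Subgroup.mem_zpowers_iff.mpr ⟨i.cast, by rw [a_one_zpow, ZMod.intCast_zmod_cast]⟩

variable {k : Type*} [Field k] (V : FDRep k (QuaternionGroup n))

theorem span_pair_xa_zero_eq_top [Simple V] {χ : Subgroup.zpowers (a 1 : QuaternionGroup n) → k}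
    {v : V} (hv : v ∈ V.weightSpace (Subgroup.zpowers (a 1)).subtype χ) (hv₀ : v ≠ 0) :
    Submodule.span k {v, V.ρ (xa 0) v} = ⊤ := by
  have hav : ∀ i, V.ρ (a i) v = χ ⟨a i, a_mem_zpowers_a_one i⟩ • v := fun i ↦
    FDRep.mem_weightSpace.mp hv ⟨a i, a_mem_zpowers_a_one i⟩
  have hmaps : ∀ g, V.ρ g v ∈ Submodule.span k {v, V.ρ (xa 0) v} := by
    rintro (i | i)
    · rw [hav]
      exact Submodule.smul_mem _ _ (Submodule.subset_span (Set.mem_insert _ _))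
    · rw [show xa i = xa 0 * a i by rw [xa_mul_a, zero_add], map_mul, Module.End.mul_apply, hav,
        map_smul]
      exact Submodule.smul_mem _ _ (Submodule.subset_span (Set.mem_insert_of_mem _ rfl))
  refine V.span_eq_top_of_invariant ?_ (Set.mem_insert _ _) hv₀
  rintro g x (rfl | rfl)
  · exact hmaps g
  · rw [← Module.End.mul_apply, ← map_mul]
    exact hmaps _

theorem finrank_weightSpace_zpowers_a_one_le_one [IsAlgClosed k] [Simple V]
    (χ : Subgroup.zpowers (a 1 : QuaternionGroup n) → k) :
    finrank k (V.weightSpace (Subgroup.zpowers (a 1)).subtype χ) ≤ 1 := by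
  classical
  set E : Submodule k V := V.weightSpace (Subgroup.zpowers (a 1)).subtype χ
  by_cases hE : E = ⊤
  · obtain ⟨μ, hμ⟩ := Module.End.exists_eigenvalue (V.ρ (xa 0) : Module.End k V)
    obtain ⟨w, hw⟩ := hμ.exists_hasEigenvector
    have hspan := span_pair_xa_zero_eq_top V (hE ▸ Submodule.mem_top : w ∈ E) hw.2
    rw [hw.apply_eq_smul, Set.pair_comm,
      Submodule.span_insert_eq_span (Submodule.smul_mem _ _ (Submodule.mem_span_singleton_self w))]
      at hspan
    calc finrank k E ≤ finrank k (k ∙ w) := Submodule.finrank_mono (hspan ▸ le_top)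
      _ = 1 := finrank_span_singleton hw.2
  · rcases eq_or_ne E ⊥ with hbot | hbot
    · rw [hbot, finrank_bot]
      exact zero_le_one
    obtain ⟨v, hv, hv₀⟩ := Submodule.exists_mem_ne_zero_of_ne_bot hbot
    have hspan := span_pair_xa_zero_eq_top V hv hv₀
    refine Nat.le_of_lt_succ ?_
    calc finrank k E < finrank k (Submodule.span k {v, V.ρ (xa 0) v}) :=
          Submodule.finrank_lt_finrank_of_lt (hspan ▸ lt_top_iff_ne_top.mpr hE)
      _ ≤ ({v, V.ρ (xa 0) v} : Finset V).card := by
          rw [← Finset.coe_pair]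
          exact finrank_span_finset_le_card _
      _ ≤ 2 := Finset.card_le_two

end QuaternionGroup

theorem isStrongGelfandPair_dicyclic_a_general (n : ℕ) :
    IsStrongGelfandPair (QuaternionGroup n)
      (Subgroup.zpowers (QuaternionGroup.a 1)) := by
  intro V W _ _
  obtain ⟨χ, hχ⟩ := FDRep.exists_finrank_hom_res_le_finrank_weightSpace _ W V
  exact hχ.trans (QuaternionGroup.finrank_weightSpace_zpowers_a_one_le_one V χ)

/-- For every `n ≥ 2`, the pair `(Dic_{4n}, ⟨a⟩)` is a strong Gelfand pair,
where `⟨a⟩` is the maximal cyclic subgroup of order `2n`. -/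
theorem isStrongGelfandPair_dicyclic_a (n : ℕ) (hn : 2 ≤ n) :
    IsStrongGelfandPair (QuaternionGroup n)
      (Subgroup.zpowers (QuaternionGroup.a 1)) :=
  isStrongGelfandPair_dicyclic_a_general n
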